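/- arXiv:math/0701567 — 5 statements merged into one kernel-verified Lean document; each statement's English description precedes it below -/
import Mathlib

section
/- Let P(z) = α + βz + γz² + δz³ be a polynomial of degree 3 with real coefficients α, β, γ, δ and δ > 0. Then all complex roots of P lie in the open half-plane {z ∈ ℂ : Re z < 1/2} if and only if P(1/2) > 0, P'(1/2) > 0, and Δ₂ := (γ + δ)(β + γ + δ) − αδ > 0. -/
open Polynomial Filter


lemma complex_quad_eval (p q r X Y : ℝ) :
    (p : ℂ) * (((X : ℝ) : ℂ) + ((Y : ℝ) : ℂ) * Complex.I) ^ 2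
        + (q : ℂ) * (((X : ℝ) : ℂ) + ((Y : ℝ) : ℂ) * Complex.I) + (r : ℂ)
      = ((p * (X ^ 2 - Y ^ 2) + q * X + r : ℝ) : ℂ)
        + ((2 * p * X * Y + q * Y : ℝ) : ℂ) * Complex.I := by
  push_cast
  linear_combination ((p : ℂ) * ((Y : ℝ) : ℂ) ^ 2) * Complex.I_sq

-- quadratic: all complex roots have Re < 1/2  ⇒  b+δ > 0 and q positive on [1/2, ∞)
lemma quad_pos (δ b c : ℝ) (hδ : 0 < δ)
    (h : ∀ z : ℂ, (δ : ℂ) * z ^ 2 + (b : ℂ) * z + (c : ℂ) = 0 → z.re < 1 / 2) :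
    0 < b + δ ∧ ∀ x : ℝ, 1 / 2 ≤ x → 0 < δ * x ^ 2 + b * x + c := by
  rcases le_or_gt (4 * δ * c) (b ^ 2) with hD | hD
  · -- real roots
    set s := Real.sqrt (b ^ 2 - 4 * δ * c) with hsdef
    have hs : s ^ 2 = b ^ 2 - 4 * δ * c := Real.sq_sqrt (by linarith)
    have hs0 : 0 ≤ s := Real.sqrt_nonneg _
    have hroot : ∀ t : ℝ, t = (-b + s) / (2 * δ) ∨ t = (-b - s) / (2 * δ) →
        δ * t ^ 2 + b * t + c = 0 := by
      rintro t (rfl | rfl) <;> (field_simp; nlinarith [hs])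
    have hlt : ∀ t : ℝ, δ * t ^ 2 + b * t + c = 0 → t < 1 / 2 := by
      intro t ht
      have := h (t : ℂ) (by push_cast; exact_mod_cast congrArg (Complex.ofReal) ht)
      simpa using this
    have hv : (-b + s) / (2 * δ) < 1 / 2 := hlt _ (hroot _ (Or.inl rfl))
    have hu : (-b - s) / (2 * δ) < 1 / 2 := hlt _ (hroot _ (Or.inr rfl))
    have hv' : s < b + δ := by
      have h2 : -b + s < δ := by
        have := (div_lt_iff₀ (by linarith : (0:ℝ) < 2 * δ)).mp hv; linarith
      linarith
    have hbδ : 0 < b + δ := lt_of_le_of_lt hs0 hv'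
    refine ⟨hbδ, fun x hx => ?_⟩
    have hA : 0 < 2 * δ * x + b - s := by nlinarith
    have hB : 0 < 2 * δ * x + b + s := by nlinarith
    nlinarith [mul_pos hA hB]
  · -- complex conjugate roots
    set s := Real.sqrt (4 * δ * c - b ^ 2) with hsdef
    have hs : s ^ 2 = 4 * δ * c - b ^ 2 := Real.sq_sqrt (by linarith)
    have hspos : 0 < s := Real.sqrt_pos.mpr (by linarith)
    set w : ℂ := ((-b / (2 * δ) : ℝ) : ℂ) + ((s / (2 * δ) : ℝ) : ℂ) * Complex.I with hw
    have hre : δ * ((-b / (2 * δ)) ^ 2 - (s / (2 * δ)) ^ 2) + b * (-b / (2 * δ)) + c = 0 := by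
      field_simp
      nlinarith [hs]
    have him : 2 * δ * (-b / (2 * δ)) * (s / (2 * δ)) + b * (s / (2 * δ)) = 0 := by
      field_simp
      ring
    have hq : (δ : ℂ) * w ^ 2 + (b : ℂ) * w + (c : ℂ) = 0 := by
      rw [hw, complex_quad_eval, hre, him]
      simp
    have hwre : w.re = -b / (2 * δ) := by
      rw [hw]
      simp only [Complex.add_re, Complex.ofReal_re, Complex.mul_re, Complex.I_re,
        Complex.I_im, Complex.ofReal_im, mul_zero, mul_one, zero_mul, zero_sub, sub_zero]
      ring
    have hlt := h w hq
    rw [hwre] at hlt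
    have hbδ : 0 < b + δ := by
      have := (div_lt_iff₀ (by linarith : (0:ℝ) < 2 * δ)).mp hlt; linarith
    refine ⟨hbδ, fun x hx => ?_⟩
    nlinarith [sq_nonneg (2 * δ * x + b), hs, hspos]

lemma cubic_tendsto (α β γ δ : ℝ) (hδ : 0 < δ) :
    Tendsto (fun x : ℝ => α + β * x + γ * x ^ 2 + δ * x ^ 3) atTop atTop := by
  set p : ℝ[X] := C α + C β * X + C γ * X ^ 2 + C δ * X ^ 3 with hp
  have hnat : p.natDegree = 3 := by rw [hp]; compute_degree!; exact hδ.ne'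
  have hlc : p.leadingCoeff = δ := by
    rw [Polynomial.leadingCoeff, hnat, hp]
    simp [coeff_C, coeff_X_pow, coeff_C_mul]
  have hdeg : 0 < p.degree := by
    rw [degree_eq_natDegree (fun h => by simp [h] at hlc; linarith), hnat]
    norm_num
  have := p.tendsto_atTop_of_leadingCoeff_nonneg hdeg (by rw [hlc]; positivity)
  have hev : ∀ x : ℝ, p.eval x = α + β * x + γ * x ^ 2 + δ * x ^ 3 := by
    intro x; simp [hp]
  simpa [hev] using this

lemma exists_real_root (α β γ δ : ℝ) (hδ : 0 < δ) :
    ∃ r : ℝ, α + β * r + γ * r ^ 2 + δ * r ^ 3 = 0 := by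
  set f : ℝ → ℝ := fun x => α + β * x + γ * x ^ 2 + δ * x ^ 3 with hf
  have hcont : Continuous f := by fun_prop
  have htop : Tendsto f atTop atTop := cubic_tendsto α β γ δ hδ
  have hbot : Tendsto f atBot atBot := by
    have h2 := cubic_tendsto (-α) β (-γ) δ hδ
    have key : ∀ x : ℝ, f x = -((-α) + β * (-x) + (-γ) * (-x) ^ 2 + δ * (-x) ^ 3) := by
      intro x; simp [hf]; ring
    have : Tendsto (fun x : ℝ => (-α) + β * (-x) + (-γ) * (-x) ^ 2 + δ * (-x) ^ 3) atBot atTop :=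
      h2.comp tendsto_neg_atBot_atTop
    have hneg : Tendsto (fun x : ℝ => -((-α) + β * (-x) + (-γ) * (-x) ^ 2 + δ * (-x) ^ 3)) atBot atBot :=
      tendsto_neg_atTop_atBot.comp this
    exact hneg.congr (fun x => (key x).symm)
  obtain ⟨r, hr⟩ := (hcont.surjective htop hbot) 0
  exact ⟨r, hr⟩

/-- Routh–Hurwitz type criterion in degree 3: all complex roots of
`α + β z + γ z² + δ z³` (real coefficients, `δ > 0`) lie in `{Re z < 1/2}`
iff `P(1/2) > 0`, `P'(1/2) > 0` and `Δ₂ = (γ+δ)(β+γ+δ) - αδ > 0`. -/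

theorem degree_three_roots_in_half_plane (α β γ δ : ℝ) (hδ : 0 < δ) :
    (∀ z : ℂ, (α : ℂ) + (β : ℂ) * z + (γ : ℂ) * z ^ 2 + (δ : ℂ) * z ^ 3 = 0 →
        z.re < 1 / 2) ↔
      (0 < α + β * (1 / 2) + γ * (1 / 2) ^ 2 + δ * (1 / 2) ^ 3 ∧
        0 < deriv (fun x : ℝ => α + β * x + γ * x ^ 2 + δ * x ^ 3) (1 / 2) ∧
        0 < (γ + δ) * (β + γ + δ) - α * δ) := by
  have hdconst : HasDerivAt (fun x : ℝ => α + β * x + γ * x ^ 2 + δ * x ^ 3)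
      (0 + β * 1 + γ * (2 * (1/2:ℝ) ^ 1) + δ * (3 * (1/2:ℝ) ^ 2)) (1/2) :=
    (((hasDerivAt_const _ α).add ((hasDerivAt_id (1/2:ℝ)).const_mul β |>.congr_deriv (by ring))).add
      (((hasDerivAt_pow 2 (1/2:ℝ)).const_mul γ))).add ((hasDerivAt_pow 3 (1/2:ℝ)).const_mul δ)
  have hd : deriv (fun x : ℝ => α + β * x + γ * x ^ 2 + δ * x ^ 3) (1/2) = β + γ + 3*δ/4 := by
    rw [hdconst.deriv]; norm_num; ring
  rw [hd]
  constructor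
  · intro h
    obtain ⟨r, hr⟩ := exists_real_root α β γ δ hδ
    have hrC : (α : ℂ) + (β : ℂ) * (r : ℂ) + (γ : ℂ) * (r : ℂ) ^ 2 + (δ : ℂ) * (r : ℂ) ^ 3 = 0 := by
      push_cast
      exact_mod_cast congrArg (Complex.ofReal) hr
    have hr2 : r < 1 / 2 := by simpa using h (r : ℂ) hrC
    -- factor: P(z) = (z - r) * (δ z² + b z + c) with b = γ + δ r, c = β + γ r + δ r²
    have hfacC : ∀ t : ℂ, (α : ℂ) + (β : ℂ) * t + (γ : ℂ) * t ^ 2 + (δ : ℂ) * t ^ 3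
        = (t - (r : ℂ)) * ((δ : ℂ) * t ^ 2 + ((γ + δ * r : ℝ) : ℂ) * t
          + ((β + γ * r + δ * r ^ 2 : ℝ) : ℂ)) := by
      intro t; push_cast; linear_combination hrC
    obtain ⟨hbδ, hqpos⟩ := quad_pos δ (γ + δ * r) (β + γ * r + δ * r ^ 2) hδ
      (fun z hz => h z (by rw [hfacC z, hz, mul_zero]))
    have hq2 := hqpos (1/2) le_rfl
    have hq1r := hqpos (1 - r) (by linarith)
    refine ⟨?_, ?_, ?_⟩
    · nlinarith [mul_pos (by linarith : (0:ℝ) < 1/2 - r) hq2]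
    · nlinarith [mul_pos (by linarith : (0:ℝ) < 1/2 - r) hbδ, hq2]
    · nlinarith [mul_pos hbδ hq1r, hr]
  · rintro ⟨h0, h1, h2⟩ z hz
    by_contra hx
    push_neg at hx
    obtain ⟨hre, him⟩ := Complex.ext_iff.mp hz
    simp only [Complex.add_re, Complex.add_im, Complex.mul_re, Complex.mul_im,
      Complex.ofReal_re, Complex.ofReal_im, Complex.zero_re, Complex.zero_im,
      pow_succ, pow_zero, one_mul, Complex.one_re, Complex.one_im, Complex.mul_re,
      Complex.mul_im, zero_mul, mul_zero, zero_sub, sub_zero, zero_add, add_zero] at hre him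
    have a0pos : 0 < α + β/2 + γ/4 + δ/8 := by nlinarith [h0]
    have a1pos : 0 < β + γ + 3*δ/4 := h1
    have hRH : 0 < (β + γ + 3*δ/4) * (γ + 3*δ/2) - (α + β/2 + γ/4 + δ/8) * δ := by nlinarith [h2]
    have a2pos : 0 < γ + 3*δ/2 := by nlinarith [mul_pos a0pos hδ]
    have hu : (0:ℝ) ≤ z.re - 1/2 := by linarith
    have E1 : δ * ((z.re - 1/2)^3 - 3*(z.re - 1/2)*z.im^2)
        + (γ + 3*δ/2) * ((z.re - 1/2)^2 - z.im^2) + (β + γ + 3*δ/4) * (z.re - 1/2)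
        + (α + β/2 + γ/4 + δ/8) = 0 := by
      linear_combination hre
    have E2 : z.im * (3*δ*(z.re - 1/2)^2 - δ*z.im^2 + 2*(γ + 3*δ/2)*(z.re - 1/2)
        + (β + γ + 3*δ/4)) = 0 := by
      linear_combination him
    clear hre him hz hx
    generalize hU : z.re - 1/2 = u at hu E1 E2
    generalize hY : z.im = y at E1 E2
    rcases mul_eq_zero.mp E2 with hy0 | hy2
    · rw [hy0] at E1
      have e : δ*u^3 + (γ + 3*δ/2)*u^2 + (β + γ + 3*δ/4)*u + (α + β/2 + γ/4 + δ/8) = 0 := by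
        linear_combination E1
      linarith [mul_nonneg hδ.le (pow_nonneg hu 3), mul_nonneg a2pos.le (pow_nonneg hu 2),
        mul_nonneg a1pos.le hu]
    · have key : -(8*δ^2*u^3) - 8*(γ + 3*δ/2)*δ*u^2 - 2*((β + γ + 3*δ/4)*δ + (γ + 3*δ/2)^2)*u
          + ((α + β/2 + γ/4 + δ/8)*δ - (β + γ + 3*δ/4)*(γ + 3*δ/2)) = 0 := by
        linear_combination δ * E1 - (3*δ*u + (γ + 3*δ/2)) * hy2
      have t3 : 0 ≤ δ^2 * u^3 := mul_nonneg (sq_nonneg δ) (pow_nonneg hu 3)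
      have t2 : 0 ≤ (γ + 3*δ/2) * δ * u^2 :=
        mul_nonneg (mul_nonneg a2pos.le hδ.le) (pow_nonneg hu 2)
      have t1 : 0 ≤ ((β + γ + 3*δ/4)*δ + (γ + 3*δ/2)^2) * u :=
        mul_nonneg (by nlinarith) hu
      linarith [key, t1, t2, t3, hRH]
end

section
/- Let Q(z) = a₀z⁴ + a₁z³ + a₂z² + a₃z + a₄ be a polynomial of degree 4 with real coefficients and a₀ > 0. Then all complex roots of Q have negative real part (Q is stable) if and only if a₂ > 0, a₃ > 0, a₄ > 0, and Δ₃ := a₁a₂a₃ − a₁²a₄ − a₀a₃² > 0. -/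
/-!
Over `ℝ` every monic quartic is a product of two monic real quadratics
`(z² + p z + q)(z² + r z + s)`. The roots of `z² + p z + q` are `(-p ± s) / 2` with
`s² = p² - 4q`, so it is stable iff `|Re s| < p`, i.e. iff `p, q > 0`; hence stability
of the quartic means `p, q, r, s > 0`. Comparing coefficients, `a₂, a₃, a₄` are `a₀` times
`q + s + p r`, `p s + q r`, `q s`, while `Δ₃ = a₀³ p r ((p + r)(p s + q r) + (q - s)²)`;
from this the positivity of `p, q, r, s` and the Liénard–Chipart conditions are seen to
be equivalent.
-/

open Polynomial

def IsHurwitzStable (f : ℝ[X]) : Prop :=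
  ∀ z : ℂ, aeval z f = 0 → z.re < 0

theorem isHurwitzStable_mul {f g : ℝ[X]} :
    IsHurwitzStable (f * g) ↔ IsHurwitzStable f ∧ IsHurwitzStable g := by
  simp only [IsHurwitzStable, map_mul, mul_eq_zero, or_imp, forall_and]

theorem isHurwitzStable_C_mul {a : ℝ} (ha : a ≠ 0) {f : ℝ[X]} :
    IsHurwitzStable (C a * f) ↔ IsHurwitzStable f := by
  simp [IsHurwitzStable, ha]

theorem abs_re_lt_iff_of_mul_self_eq {p q : ℝ} {s : ℂ} (hs : s * s = p ^ 2 - 4 * q) :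
    |s.re| < p ↔ 0 < p ∧ 0 < q := by
  have hre : s.re ^ 2 - s.im ^ 2 = p ^ 2 - 4 * q := by
    simpa [sq, Complex.mul_re] using congrArg Complex.re hs
  have him : s.re * s.im = 0 := by
    simpa [sq, Complex.mul_im, mul_comm, ← two_mul] using congrArg Complex.im hs
  constructor
  · intro h
    have hp : 0 < p := (abs_nonneg _).trans_lt h
    have : s.re ^ 2 < p ^ 2 := by
      simpa [sq_abs] using pow_lt_pow_left₀ h (abs_nonneg _) two_ne_zero
    exact ⟨hp, by nlinarith [sq_nonneg s.im]⟩
  · rintro ⟨hp, hq⟩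
    rcases mul_eq_zero.mp him with h | h
    · simpa [h] using hp
    · exact abs_lt_of_sq_lt_sq (by nlinarith) hp.le

theorem isHurwitzStable_quadratic_iff (p q : ℝ) :
    IsHurwitzStable (X ^ 2 + C p * X + C q) ↔ 0 < p ∧ 0 < q := by
  obtain ⟨s, hs⟩ := IsAlgClosed.exists_eq_mul_self (discrim (1 : ℂ) p q)
  have hroots (z : ℂ) : aeval z (X ^ 2 + C p * X + C q) = 0 ↔
      z = (-p + s) / 2 ∨ z = (-p - s) / 2 := by
    simpa [sq] using quadratic_eq_zero_iff one_ne_zero hs z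
  rw [← abs_re_lt_iff_of_mul_self_eq (s := s) (by rw [← hs, discrim]; ring), abs_lt]
  simp only [IsHurwitzStable, hroots, or_imp, forall_and, forall_eq, Complex.div_ofNat_re,
    Complex.add_re, Complex.sub_re, Complex.neg_re, Complex.ofReal_re]
  constructor <;> rintro ⟨h₁, h₂⟩ <;> constructor <;> linarith

theorem exists_quadratic_factors (a₀ a₁ a₂ a₃ a₄ : ℝ) (ha₀ : a₀ ≠ 0) :
    ∃ p q r s : ℝ, a₁ = a₀ * (p + r) ∧ a₂ = a₀ * (q + s + p * r) ∧
      a₃ = a₀ * (p * s + q * r) ∧ a₄ = a₀ * (q * s) := by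
  have hf : IsMonicOfDegree (X ^ 4 + C (a₁ / a₀) * X ^ 3 + C (a₂ / a₀) * X ^ 2 +
      C (a₃ / a₀) * X + C (a₄ / a₀)) 4 := by
    rw [isMonicOfDegree_iff]
    exact ⟨by compute_degree!, by simp⟩
  obtain ⟨f₁, f₂, hf₁, hf₂, hf₁₂⟩ := hf.eq_isMonicOfDegree_two_mul_isMonicOfDegree
  obtain ⟨p, q, rfl⟩ := isMonicOfDegree_two_iff.mp hf₁
  obtain ⟨r, s, rfl⟩ := isMonicOfDegree_two_iff.mp hf₂
  have hprod : (X ^ 2 + C p * X + C q) * (X ^ 2 + C r * X + C s) = X ^ 4 + C (p + r) * X ^ 3 +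
      C (q + s + p * r) * X ^ 2 + C (p * s + q * r) * X + C (q * s) := by
    simp only [map_add, map_mul]
    ring
  rw [hprod] at hf₁₂
  have h₁ := congrArg (coeff · 3) hf₁₂
  have h₂ := congrArg (coeff · 2) hf₁₂
  have h₃ := congrArg (coeff · 1) hf₁₂
  have h₄ := congrArg (coeff · 0) hf₁₂
  simp only [coeff_add, coeff_C_mul, coeff_X_pow, coeff_X, coeff_C] at h₁ h₂ h₃ h₄
  norm_num [div_eq_iff ha₀] at h₁ h₂ h₃ h₄
  exact ⟨p, q, r, s, by linarith, by linarith, by linarith, by linarith⟩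

theorem pos_and_pos_of_mul_pos_of_add_pos {α : Type*} [Ring α] [LinearOrder α]
    [IsStrictOrderedRing α] {a b : α} (hmul : 0 < a * b) (hadd : 0 < a + b) :
    0 < a ∧ 0 < b :=
  (pos_and_pos_or_neg_and_neg_of_mul_pos hmul).resolve_right fun ⟨ha, hb⟩ =>
    (add_neg ha hb).not_gt hadd

theorem pos_of_lienardChipart {p q r s : ℝ} (h₂ : 0 < q + s + p * r) (h₃ : 0 < p * s + q * r)
    (h₄ : 0 < q * s) (hΔ : 0 < p * r * ((p + r) * (p * s + q * r) + (q - s) ^ 2)) :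
    0 < p ∧ 0 < q ∧ 0 < r ∧ 0 < s := by
  -- Expanded, `hΔ` says `(p + r)(q + s + p r)(p s + q r) > (p + r)² q s + (p s + q r)²`,
  -- which forces `p + r > 0`.
  have hpr : 0 < p + r := by
    by_contra! h
    nlinarith [mul_nonpos_of_nonpos_of_nonneg h (mul_pos h₂ h₃).le, sq_nonneg (p + r)]
  obtain ⟨hq, hs⟩ : 0 < q ∧ 0 < s := by
    refine (pos_and_pos_or_neg_and_neg_of_mul_pos h₄).resolve_right fun ⟨hq, hs⟩ => ?_
    obtain ⟨hp, hr⟩ := pos_and_pos_of_mul_pos_of_add_pos (by linarith) hpr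
    nlinarith [mul_pos hp (neg_pos.2 hs), mul_pos hr (neg_pos.2 hq)]
  have hsecond : 0 < (p + r) * (p * s + q * r) + (q - s) ^ 2 := by positivity
  obtain ⟨hp, hr⟩ :=
    pos_and_pos_of_mul_pos_of_add_pos (pos_of_mul_pos_left hΔ hsecond.le) hpr
  exact ⟨hp, hq, hr, hs⟩

theorem pos_iff_lienardChipart {a₀ : ℝ} (ha₀ : 0 < a₀) (p q r s : ℝ) :
    (0 < p ∧ 0 < q ∧ 0 < r ∧ 0 < s) ↔
      0 < a₀ * (q + s + p * r) ∧ 0 < a₀ * (p * s + q * r) ∧ 0 < a₀ * (q * s) ∧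
        0 < a₀ * (p + r) * (a₀ * (q + s + p * r)) * (a₀ * (p * s + q * r)) -
          (a₀ * (p + r)) ^ 2 * (a₀ * (q * s)) - a₀ * (a₀ * (p * s + q * r)) ^ 2 := by
  have hΔ : a₀ * (p + r) * (a₀ * (q + s + p * r)) * (a₀ * (p * s + q * r)) -
      (a₀ * (p + r)) ^ 2 * (a₀ * (q * s)) - a₀ * (a₀ * (p * s + q * r)) ^ 2 =
        a₀ ^ 3 * (p * r * ((p + r) * (p * s + q * r) + (q - s) ^ 2)) := by
    ring
  rw [hΔ, mul_pos_iff_of_pos_left ha₀, mul_pos_iff_of_pos_left ha₀, mul_pos_iff_of_pos_left ha₀,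
    mul_pos_iff_of_pos_left (pow_pos ha₀ 3)]
  constructor
  · rintro ⟨hp, hq, hr, hs⟩
    exact ⟨by positivity, by positivity, by positivity, by positivity⟩
  · rintro ⟨h₂, h₃, h₄, hΔ⟩
    exact pos_of_lienardChipart h₂ h₃ h₄ hΔ

/-- Liénard–Chipart criterion in degree 4: the real polynomial
`a₀ z⁴ + a₁ z³ + a₂ z² + a₃ z + a₄` (with `a₀ > 0`) is stable (all complex
roots have negative real part) iff `a₂ > 0`, `a₃ > 0`, `a₄ > 0` and
`Δ₃ = a₁a₂a₃ - a₁²a₄ - a₀a₃² > 0`. -/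
theorem degree_four_stability (a₀ a₁ a₂ a₃ a₄ : ℝ) (ha₀ : 0 < a₀) :
    (∀ z : ℂ, (a₀ : ℂ) * z ^ 4 + (a₁ : ℂ) * z ^ 3 + (a₂ : ℂ) * z ^ 2 +
        (a₃ : ℂ) * z + (a₄ : ℂ) = 0 → z.re < 0) ↔
      (0 < a₂ ∧ 0 < a₃ ∧ 0 < a₄ ∧
        0 < a₁ * a₂ * a₃ - a₁ ^ 2 * a₄ - a₀ * a₃ ^ 2) := by
  obtain ⟨p, q, r, s, rfl, rfl, rfl, rfl⟩ := exists_quadratic_factors a₀ a₁ a₂ a₃ a₄ ha₀.ne'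
  have hfactor (z : ℂ) : (a₀ : ℂ) * z ^ 4 + ↑(a₀ * (p + r)) * z ^ 3 +
      ↑(a₀ * (q + s + p * r)) * z ^ 2 + ↑(a₀ * (p * s + q * r)) * z + ↑(a₀ * (q * s)) =
        aeval z (C a₀ * ((X ^ 2 + C p * X + C q) * (X ^ 2 + C r * X + C s))) := by
    simp only [map_mul, map_add, map_pow, aeval_C, aeval_X, Complex.coe_algebraMap]
    push_cast
    ring
  simp_rw [hfactor]
  rw [← IsHurwitzStable, isHurwitzStable_C_mul ha₀.ne', isHurwitzStable_mul,
    isHurwitzStable_quadratic_iff, isHurwitzStable_quadratic_iff, ← pos_iff_lienardChipart ha₀,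
    and_assoc]
end

section
/- Let P(z) = α + βz + γz² + δz³ + εz⁴ be a polynomial of degree 4 with real coefficients α, β, γ, δ, ε and ε > 0. Then all complex roots of P lie in the open half-plane {z ∈ ℂ : Re z < 1/2} if and only if P(1/2) > 0, P'(1/2) > 0, P''(1/2) > 0, and Δ₃ := (ε + δ + γ + β)[(ε + δ + γ)(ε + δ) − εβ] − (2ε + δ)²α > 0. -/
/-!
Translating by `1 / 2` and dividing by `ε` turns the statement into the Routh–Hurwitz criterion
for the real monic quartic `z⁴ + a z³ + b z² + c z + d` with `d = P(1/2)/ε`, `c = P'(1/2)/ε`,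
`b = P''(1/2)/(2ε)`. A nonnegative root of the resolvent cubic factors it into two real monic
quadratics `z² + pᵢ z + qᵢ`, and such a quadratic has its roots in `Re z < 0` iff `pᵢ, qᵢ > 0`.
In terms of the factors the Hurwitz determinant is
`a b c - c² - a² d = p₁ p₂ ((q₁ - q₂)² + (p₁ + p₂)(p₁ q₂ + p₂ q₁))`,
from which the signs of the `pᵢ, qᵢ` can be read off the Hurwitz conditions.
-/

open Complex

lemma exists_nonneg_cubic_root (A B C : ℝ) (hC : C ≤ 0) :
    ∃ t : ℝ, 0 ≤ t ∧ t ^ 3 + A * t ^ 2 + B * t + C = 0 := by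
  set M := 1 + |A| + |B| + |C|
  have hM : 1 ≤ M := by simp only [M]; linarith [abs_nonneg A, abs_nonneg B, abs_nonneg C]
  have hfM : 0 ≤ M ^ 3 + A * M ^ 2 + B * M + C := by
    nlinarith [neg_abs_le A, neg_abs_le B, neg_abs_le C, sq_nonneg M,
      abs_nonneg A, abs_nonneg B, abs_nonneg C,
      mul_le_mul_of_nonneg_left hM (abs_nonneg B), mul_le_mul_of_nonneg_left hM (abs_nonneg C)]
  obtain ⟨t, ht, hroot⟩ := intermediate_value_Icc (by linarith : (0 : ℝ) ≤ M)
    (f := fun t : ℝ => t ^ 3 + A * t ^ 2 + B * t + C) (by fun_prop) ⟨by simpa using hC, hfM⟩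
  exact ⟨t, ht.1, hroot⟩

lemma exists_factor_depressed_quartic (p q r : ℝ) :
    ∃ s u v : ℝ, u + v - s ^ 2 = p ∧ s * (v - u) = q ∧ u * v = r := by
  by_cases hq : q = 0
  · rcases le_or_gt 0 (p ^ 2 - 4 * r) with hdisc | hdisc
    · have hsq := Real.sq_sqrt hdisc
      refine ⟨0, (p - √(p ^ 2 - 4 * r)) / 2, (p + √(p ^ 2 - 4 * r)) / 2, by ring, by simp [hq], ?_⟩
      linear_combination -hsq / 4
    · have hr : 0 < r := by nlinarith [sq_nonneg p]
      have hsr := Real.sq_sqrt hr.le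
      have hs : 0 ≤ 2 * √r - p := by nlinarith [Real.sqrt_nonneg r]
      refine ⟨√(2 * √r - p), √r, √r, ?_, by simp [hq], by rw [← sq, hsr]⟩
      rw [Real.sq_sqrt hs]; ring
  -- `s ^ 2` is a positive root of the resolvent cubic `t³ + 2p t² + (p² - 4r) t - q²`.
  · obtain ⟨t, ht, hroot⟩ :=
      exists_nonneg_cubic_root (2 * p) (p ^ 2 - 4 * r) (-q ^ 2) (by nlinarith [sq_nonneg q])
    have htpos : 0 < t := ht.lt_of_ne fun h => hq (by subst h; simpa using hroot)
    have hs2 : √t ^ 2 = t := Real.sq_sqrt ht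
    have hs : 0 < √t := Real.sqrt_pos.mpr htpos
    refine ⟨√t, (p + t - q / √t) / 2, (p + t + q / √t) / 2, by rw [hs2]; ring, ?_, ?_⟩
    · field_simp; ring
    · field_simp
      nlinarith [hroot, hs2]

lemma exists_factor_quartic (a b c d : ℝ) : ∃ p₁ q₁ p₂ q₂ : ℝ,
    p₁ + p₂ = a ∧ q₁ + q₂ + p₁ * p₂ = b ∧ p₁ * q₂ + p₂ * q₁ = c ∧ q₁ * q₂ = d := by
  obtain ⟨s, u, v, h₁, h₂, h₃⟩ := exists_factor_depressed_quartic (b - 3 * a ^ 2 / 8)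
    (c - a * b / 2 + a ^ 3 / 8) (d - a * c / 4 + a ^ 2 * b / 16 - 3 * a ^ 4 / 256)
  refine ⟨a / 2 + s, a ^ 2 / 16 + s * a / 4 + u, a / 2 - s, a ^ 2 / 16 - s * a / 4 + v,
    by ring, ?_, ?_, ?_⟩
  · linear_combination h₁
  · linear_combination a / 2 * h₁ + h₂
  · linear_combination a ^ 2 / 16 * h₁ + a / 4 * h₂ + h₃

lemma quadratic_roots_re_neg_iff (p q : ℝ) :
    (∀ z : ℂ, z ^ 2 + p * z + q = 0 → z.re < 0) ↔ 0 < p ∧ 0 < q := by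
  constructor
  · intro h
    constructor
    -- With `z` a root, so is `-p - z`, and the two real parts add up to `-p`.
    · obtain ⟨s, hs⟩ := IsAlgClosed.exists_eq_mul_self ((p : ℂ) ^ 2 - 4 * q)
      have hz : ((-p + s) / 2) ^ 2 + p * ((-p + s) / 2) + q = 0 := by
        linear_combination -hs / 4
      have hz' : (-p - (-p + s) / 2) ^ 2 + p * (-p - (-p + s) / 2) + q = 0 := by
        linear_combination hz
      have h₁ := h _ hz
      have h₂ := h _ hz'
      simp only [sub_re, neg_re, ofReal_re, div_ofNat_re, add_re] at h₁ h₂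
      linarith
    · by_contra! hq
      have hsq := Real.sq_sqrt (by nlinarith : 0 ≤ p ^ 2 - 4 * q)
      have hps : p ≤ √(p ^ 2 - 4 * q) := (le_abs_self p).trans (Real.abs_le_sqrt (by linarith))
      have hroot := h ((-p + √(p ^ 2 - 4 * q)) / 2 : ℝ) (by
        have : ((-p + √(p ^ 2 - 4 * q)) / 2) ^ 2 + p * ((-p + √(p ^ 2 - 4 * q)) / 2) + q = 0 := by
          linear_combination hsq / 4
        exact_mod_cast this)
      rw [ofReal_re] at hroot
      linarith
  · rintro ⟨hp, hq⟩ z hz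
    by_contra! hre
    have hzre := congrArg re hz
    have hzim := congrArg im hz
    simp only [sq, add_re, add_im, mul_re, mul_im, ofReal_re, ofReal_im, zero_re, zero_im]
      at hzre hzim
    -- The imaginary part of the equation reads `im z * (2 * re z + p) = 0`.
    rcases mul_eq_zero.mp (by linarith : z.im * (2 * z.re + p) = 0) with him | him
    · rw [him] at hzre
      nlinarith
    · linarith

lemma hurwitz_pos_iff_of_factor (p₁ q₁ p₂ q₂ : ℝ) :
    ((0 < p₁ ∧ 0 < q₁) ∧ 0 < p₂ ∧ 0 < q₂) ↔
      0 < q₁ * q₂ ∧ 0 < p₁ * q₂ + p₂ * q₁ ∧ 0 < q₁ + q₂ + p₁ * p₂ ∧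
        0 < (p₁ + p₂) * (q₁ + q₂ + p₁ * p₂) * (p₁ * q₂ + p₂ * q₁) - (p₁ * q₂ + p₂ * q₁) ^ 2 -
          (p₁ + p₂) ^ 2 * (q₁ * q₂) := by
  have hΔ : (p₁ + p₂) * (q₁ + q₂ + p₁ * p₂) * (p₁ * q₂ + p₂ * q₁) - (p₁ * q₂ + p₂ * q₁) ^ 2 -
      (p₁ + p₂) ^ 2 * (q₁ * q₂) =
        p₁ * p₂ * ((q₁ - q₂) ^ 2 + (p₁ + p₂) * (p₁ * q₂ + p₂ * q₁)) := by ring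
  rw [hΔ]
  constructor
  · rintro ⟨⟨hp₁, hq₁⟩, hp₂, hq₂⟩
    exact ⟨by positivity, by positivity, by positivity, by positivity⟩
  · rintro ⟨hd, hc, hb, hpos⟩
    have ha : 0 < p₁ + p₂ := by
      by_contra! ha
      nlinarith [mul_nonneg (mul_nonneg (neg_nonneg.mpr ha) hb.le) hc.le,
        mul_nonneg (sq_nonneg (p₁ + p₂)) hd.le, hΔ]
    have hp : 0 < p₁ * p₂ :=
      pos_of_mul_pos_left hpos (by nlinarith [sq_nonneg (q₁ - q₂), mul_pos ha hc])
    have hp₁ : 0 < p₁ := by nlinarith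
    have hp₂ : 0 < p₂ := by nlinarith
    have hq₁ : 0 < q₁ := by
      by_contra! hq₁
      have hq₁' : q₁ < 0 := hq₁.lt_of_ne (by rintro rfl; simp at hd)
      have hq₂ : q₂ < 0 := by nlinarith
      nlinarith [mul_pos hp₁ (neg_pos.mpr hq₂), mul_pos hp₂ (neg_pos.mpr hq₁')]
    exact ⟨⟨hp₁, hq₁⟩, hp₂, by nlinarith⟩

lemma monic_quartic_roots_re_neg_iff (a b c d : ℝ) :
    (∀ z : ℂ, z ^ 4 + a * z ^ 3 + b * z ^ 2 + c * z + d = 0 → z.re < 0) ↔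
      0 < d ∧ 0 < c ∧ 0 < b ∧ 0 < a * b * c - c ^ 2 - a ^ 2 * d := by
  obtain ⟨p₁, q₁, p₂, q₂, rfl, rfl, rfl, rfl⟩ := exists_factor_quartic a b c d
  have hfactor (z : ℂ) : z ^ 4 + ↑(p₁ + p₂) * z ^ 3 + ↑(q₁ + q₂ + p₁ * p₂) * z ^ 2 +
      ↑(p₁ * q₂ + p₂ * q₁) * z + ↑(q₁ * q₂) =
        (z ^ 2 + p₁ * z + q₁) * (z ^ 2 + p₂ * z + q₂) := by
    push_cast; ring
  simp only [hfactor, mul_eq_zero, or_imp, forall_and]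
  rw [quadratic_roots_re_neg_iff, quadratic_roots_re_neg_iff, hurwitz_pos_iff_of_factor]

lemma quartic_roots_re_neg_iff {e : ℝ} (he : 0 < e) (a b c d : ℝ) :
    (∀ z : ℂ, e * z ^ 4 + a * z ^ 3 + b * z ^ 2 + c * z + d = 0 → z.re < 0) ↔
      0 < d ∧ 0 < c ∧ 0 < b ∧ 0 < a * b * c - e * c ^ 2 - a ^ 2 * d := by
  have hmonic (z : ℂ) : e * z ^ 4 + a * z ^ 3 + b * z ^ 2 + c * z + d =
      e * (z ^ 4 + ↑(a / e) * z ^ 3 + ↑(b / e) * z ^ 2 + ↑(c / e) * z + ↑(d / e)) := by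
    have : (e : ℂ) ≠ 0 := ofReal_ne_zero.mpr he.ne'
    push_cast; field_simp
  have hΔ : a / e * (b / e) * (c / e) - (c / e) ^ 2 - (a / e) ^ 2 * (d / e) =
      (a * b * c - e * c ^ 2 - a ^ 2 * d) / e ^ 3 := by
    field_simp
  simp only [hmonic, mul_eq_zero, ofReal_eq_zero, he.ne', false_or]
  rw [monic_quartic_roots_re_neg_iff, hΔ]
  simp only [div_pos_iff_of_pos_right he, div_pos_iff_of_pos_right (pow_pos he 3)]

lemma roots_re_lt_iff_shift {f : ℂ → ℂ} {x : ℝ} :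
    (∀ z, f z = 0 → z.re < x) ↔ ∀ w, f (w + x) = 0 → w.re < 0 := by
  constructor
  · intro h w hw
    have := h (w + x) hw
    rw [add_re, ofReal_re] at this
    linarith
  · intro h z hz
    have := h (z - x) (by rwa [sub_add_cancel])
    rw [sub_re, ofReal_re] at this
    linarith

lemma deriv_cubic {𝕜 : Type*} [NontriviallyNormedField 𝕜] (a₀ a₁ a₂ a₃ : 𝕜) :
    deriv (fun x => a₀ + a₁ * x + a₂ * x ^ 2 + a₃ * x ^ 3) =
      fun x => a₁ + 2 * a₂ * x + 3 * a₃ * x ^ 2 := by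
  ext x
  simp (disch := fun_prop)
  ring

lemma deriv_quartic {𝕜 : Type*} [NontriviallyNormedField 𝕜] (a₀ a₁ a₂ a₃ a₄ : 𝕜) :
    deriv (fun x => a₀ + a₁ * x + a₂ * x ^ 2 + a₃ * x ^ 3 + a₄ * x ^ 4) =
      fun x => a₁ + 2 * a₂ * x + 3 * a₃ * x ^ 2 + 4 * a₄ * x ^ 3 := by
  ext x
  simp (disch := fun_prop)
  ring

/-- Routh–Hurwitz type criterion in degree 4: all complex roots of
`α + β z + γ z² + δ z³ + ε z⁴` (real coefficients, `ε > 0`) lie in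
`{Re z < 1/2}` iff `P(1/2) > 0`, `P'(1/2) > 0`, `P''(1/2) > 0` and
`Δ₃ = (ε+δ+γ+β)[(ε+δ+γ)(ε+δ) - εβ] - (2ε+δ)²α > 0`. -/
theorem degree_four_roots_in_half_plane (α β γ δ ε : ℝ) (hε : 0 < ε) :
    (∀ z : ℂ, (α : ℂ) + (β : ℂ) * z + (γ : ℂ) * z ^ 2 + (δ : ℂ) * z ^ 3 +
        (ε : ℂ) * z ^ 4 = 0 → z.re < 1 / 2) ↔
      (0 < α + β * (1 / 2) + γ * (1 / 2) ^ 2 + δ * (1 / 2) ^ 3 + ε * (1 / 2) ^ 4 ∧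
        0 < deriv (fun x : ℝ => α + β * x + γ * x ^ 2 + δ * x ^ 3 + ε * x ^ 4) (1 / 2) ∧
        0 < deriv (deriv (fun x : ℝ => α + β * x + γ * x ^ 2 + δ * x ^ 3 + ε * x ^ 4)) (1 / 2) ∧
        0 < (ε + δ + γ + β) * ((ε + δ + γ) * (ε + δ) - ε * β) - (2 * ε + δ) ^ 2 * α) := by
  have hshift (w : ℂ) : (α : ℂ) + β * (w + (1 / 2 : ℝ)) + γ * (w + (1 / 2 : ℝ)) ^ 2 +
      δ * (w + (1 / 2 : ℝ)) ^ 3 + ε * (w + (1 / 2 : ℝ)) ^ 4 =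
        ε * w ^ 4 + ((δ + 2 * ε : ℝ) : ℂ) * w ^ 3 + ((γ + 3 * δ / 2 + 3 * ε / 2 : ℝ) : ℂ) * w ^ 2 +
          ((β + γ + 3 * δ / 4 + ε / 2 : ℝ) : ℂ) * w +
          ((α + β * (1 / 2) + γ * (1 / 2) ^ 2 + δ * (1 / 2) ^ 3 + ε * (1 / 2) ^ 4 : ℝ) : ℂ) := by
    push_cast; ring
  refine roots_re_lt_iff_shift.trans ?_
  simp only [hshift]
  rw [quartic_roots_re_neg_iff hε, deriv_quartic, deriv_cubic]
  -- `Δ₃` is the Hurwitz determinant `a b c - e c² - a² d` of the shifted quartic.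
  constructor <;> rintro ⟨h₁, h₂, h₃, h₄⟩ <;>
    exact ⟨by linarith, by linarith, by linarith, by linarith⟩
end

section
/- Let m ≥ 1 be an integer, μ > 0 a real number, and P_μ^m(η) = (1−μ)(2−μ) + 3(m+1)μ(1−μ)η + (m+1)(m+2)μ²η². Then all complex roots of P_μ^m lie in the closed half-plane {η ∈ ℂ : Re η ≤ 1/2} if and only if: m = 1 and μ ≤ 2, or m = 2 and μ ≤ 4, or m ≥ 3 (in which case it holds for every μ > 0). -/
set_option maxHeartbeats 1600000


/-- Type `I_{1,2}` (unit ball of ℂ² as base): all roots of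
`P_μ^m(η) = (1-μ)(2-μ) + 3(m+1)μ(1-μ)η + (m+1)(m+2)μ²η²`
lie in `{Re η ≤ 1/2}` iff `m = 1 ∧ μ ≤ 2`, or `m = 2 ∧ μ ≤ 4`, or `m ≥ 3`. -/
theorem lu_qikeng_ball_dim_two (m : ℕ) (hm : 1 ≤ m) (μ : ℝ) (hμ : 0 < μ) :
    (∀ η : ℂ, (1 - (μ : ℂ)) * (2 - (μ : ℂ)) +
        3 * ((m : ℂ) + 1) * (μ : ℂ) * (1 - (μ : ℂ)) * η +
        ((m : ℂ) + 1) * ((m : ℂ) + 2) * (μ : ℂ) ^ 2 * η ^ 2 = 0 → η.re ≤ 1 / 2) ↔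
      ((m = 1 ∧ μ ≤ 2) ∨ (m = 2 ∧ μ ≤ 4) ∨ 3 ≤ m) := by
  have hM1 : (1:ℝ) ≤ (m:ℝ) := by exact_mod_cast hm
  set M : ℝ := (m : ℝ) with hM
  set a : ℝ := (M+1)*(M+2)*μ^2 with ha'
  set b : ℝ := 3*(M+1)*μ*(1-μ) with hb'
  set c : ℝ := (1-μ)*(2-μ) with hc'
  clear_value M a b c
  have ha : 0 < a := by
    rw [ha']
    have h2 : 0 < μ^2 := by positivity
    have := mul_pos (mul_pos (show (0:ℝ) < M+1 by linarith) (show (0:ℝ) < M+2 by linarith)) h2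
    linarith
  have hab : 0 < a + b := by
    rw [ha', hb']
    have := mul_pos (mul_pos (show (0:ℝ) < M+1 by linarith) hμ)
      (show (0:ℝ) < (M-1)*μ+3 by nlinarith)
    nlinarith
  have hrw : ∀ η : ℂ, (1 - (μ : ℂ)) * (2 - (μ : ℂ)) +
        3 * ((m : ℂ) + 1) * (μ : ℂ) * (1 - (μ : ℂ)) * η +
        ((m : ℂ) + 1) * ((m : ℂ) + 2) * (μ : ℂ) ^ 2 * η ^ 2
        = (c:ℂ) + (b:ℂ)*η + (a:ℂ)*η^2 := by
    intro η
    rw [ha', hb', hc', hM]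
    push_cast
    ring
  have key : (∀ η : ℂ, (1 - (μ : ℂ)) * (2 - (μ : ℂ)) +
        3 * ((m : ℂ) + 1) * (μ : ℂ) * (1 - (μ : ℂ)) * η +
        ((m : ℂ) + 1) * ((m : ℂ) + 2) * (μ : ℂ) ^ 2 * η ^ 2 = 0 → η.re ≤ 1 / 2)
      ↔ 0 ≤ a + 2*b + 4*c := by
    constructor
    · intro h
      by_contra hneg
      push_neg at hneg
      set D : ℝ := b^2 - 4*a*c with hD'
      have hDgt : (a+b)^2 < D := by nlinarith
      have hDnn : 0 ≤ D := le_of_lt (lt_of_le_of_lt (sq_nonneg _) hDgt)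
      set s : ℝ := Real.sqrt D with hs'
      have hs2 : s^2 = D := Real.sq_sqrt hDnn
      have hsnn : 0 ≤ s := Real.sqrt_nonneg D
      have hsg : a + b < s := by nlinarith
      set x : ℝ := (-b + s)/(2*a) with hx'
      have h2a : (2*a) ≠ 0 := by positivity
      have hroot : a*x^2 + b*x + c = 0 := by
        rw [hx']
        field_simp
        nlinarith [hs2]
      have hxgt : 1/2 < x := by
        rw [hx', lt_div_iff₀ (by linarith)]
        linarith
      have hle := h (x:ℂ) (by
        rw [hrw]
        have : ((a*x^2 + b*x + c : ℝ) : ℂ) = 0 := by rw [hroot]; norm_num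
        push_cast at this ⊢
        linear_combination this)
      simp at hle
      linarith
    · intro hf η hη
      rw [hrw] at hη
      set x : ℝ := η.re with hx'
      set y : ℝ := η.im with hy'
      clear_value x y
      have hre : c + b*x + a*(x^2 - y^2) = 0 := by
        have h1 : ((c:ℂ) + (b:ℂ)*η + (a:ℂ)*η^2).re = 0 := by rw [hη]; simp
        simp [Complex.add_re, Complex.mul_re, Complex.ofReal_re, Complex.ofReal_im,
          pow_two, Complex.mul_im, ← hx', ← hy'] at h1
        linarith [h1]
      have him : y * (2*a*x + b) = 0 := by
        have h2 : ((c:ℂ) + (b:ℂ)*η + (a:ℂ)*η^2).im = 0 := by rw [hη]; simp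
        simp [Complex.add_im, Complex.mul_im, Complex.mul_re, Complex.ofReal_re,
          Complex.ofReal_im, pow_two, ← hx', ← hy'] at h2
        nlinarith [h2]
      rcases mul_eq_zero.mp him with hy0 | hv
      · -- y = 0 : real root
        rw [hy0] at hre
        by_contra hgt
        push_neg at hgt
        nlinarith [mul_pos (show (0:ℝ) < x - 1/2 by linarith)
          (show (0:ℝ) < a*(x+1/2) + b by nlinarith)]
      · -- vertex case
        by_contra hgt
        push_neg at hgt
        have := mul_pos ha (show (0:ℝ) < 2*x - 1 by linarith)
        linarith [this, hv, hab]
  have hsum : a + 2*b + 4*c = M*(M-3)*μ^2 + 6*(M-1)*μ + 8 := by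
    rw [ha', hb', hc']; ring
  rw [key, hsum, hM]
  clear key hsum hrw hab ha ha' hb' hc'
  clear a b c hM M hM1
  rcases lt_or_ge m 3 with h3 | h3
  · interval_cases m
    · norm_num
      constructor
      · intro h; nlinarith
      · intro h; nlinarith
    · norm_num
      constructor
      · intro h; nlinarith
      · intro h; nlinarith
  · have hM3 : (3:ℝ) ≤ (m:ℝ) := by exact_mod_cast h3
    constructor
    · intro _; right; right; exact h3
    · intro _
      nlinarith [mul_nonneg (mul_nonneg (show (0:ℝ) ≤ (m:ℝ) by linarith)
        (show (0:ℝ) ≤ (m:ℝ)-3 by linarith)) (sq_nonneg μ),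
        mul_pos (show (0:ℝ) < (m:ℝ) - 1 by linarith) hμ]
end

section
/- Let m ≥ 1 be an integer and q_m(μ) = 6 + (11(m−1)/2)μ + (3m(m−3)/2)μ² + ((m−1)(m²−5m−2)/8)μ³. For m ≥ 6, q_m(μ) > 0 for all μ > 0. For 1 ≤ m ≤ 5, q_m has exactly one positive root μ_m, and for μ > 0 one has q_m(μ) ≥ 0 if and only if μ ≤ μ_m. Moreover μ₁ = √2, μ₂ = (1+√7)/2, μ₃ = 1+√(5/2), μ₄ = 2+√6, μ₅ = 8+√70, and μ₁ < μ₂ < μ₃ < μ₄ < μ₅. -/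
/-!
For `m ≥ 6` every coefficient of `q_m` is nonnegative and the constant term is `6`. For
`1 ≤ m ≤ 5`, `μ_m` is a quadratic irrational `a + √d` with `a ^ 2 < d`, and `q_m` factors as
`(μ_m - μ) · g_m(μ)` where the roots of `g_m` are the conjugate `a - √d < 0` and (for `m ≥ 2`)
a negative rational. So `g_m > 0` for `μ > 0`, and there the sign of `q_m` is that of `μ_m - μ`.
-/

/-- `q_m(μ) = P_μ^m(1/2)` for the type `I_{1,3}` representative polynomial. -/
noncomputable def qI13 (m : ℕ) (μ : ℝ) : ℝ :=
  6 + (11 * ((m : ℝ) - 1) / 2) * μ + (3 * (m : ℝ) * ((m : ℝ) - 3) / 2) * μ ^ 2 +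
    (((m : ℝ) - 1) * ((m : ℝ) ^ 2 - 5 * (m : ℝ) - 2) / 8) * μ ^ 3

section SignOfSubMul

variable {f g : ℝ → ℝ} {r μ : ℝ}

theorem eq_zero_iff_of_eq_sub_mul (hf : ∀ μ, 0 < μ → f μ = (r - μ) * g μ)
    (hg : ∀ μ, 0 < μ → 0 < g μ) (hμ : 0 < μ) : f μ = 0 ↔ μ = r := by
  rw [hf μ hμ, mul_eq_zero_iff_right (hg μ hμ).ne', sub_eq_zero, eq_comm]

theorem nonneg_iff_le_of_eq_sub_mul (hf : ∀ μ, 0 < μ → f μ = (r - μ) * g μ)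
    (hg : ∀ μ, 0 < μ → 0 < g μ) (hμ : 0 < μ) : 0 ≤ f μ ↔ μ ≤ r := by
  rw [hf μ hμ, mul_nonneg_iff_of_pos_right (hg μ hμ), sub_nonneg]

theorem existsUnique_pos_root_of_eq_sub_mul (hr : 0 < r)
    (hf : ∀ μ, 0 < μ → f μ = (r - μ) * g μ) (hg : ∀ μ, 0 < μ → 0 < g μ) :
    ∃! x, 0 < x ∧ f x = 0 :=
  ⟨r, ⟨hr, (eq_zero_iff_of_eq_sub_mul hf hg hr).2 rfl⟩,
    fun _ hx => (eq_zero_iff_of_eq_sub_mul hf hg hx.1).1 hx.2⟩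

end SignOfSubMul

theorem qI13_pos_of_six_le {m : ℕ} (hm : 6 ≤ m) {μ : ℝ} (hμ : 0 < μ) : 0 < qI13 m μ := by
  have hm' : (6 : ℝ) ≤ m := by exact_mod_cast hm
  have h₁ : 0 ≤ 11 * ((m : ℝ) - 1) / 2 := by linarith
  have h₂ : 0 ≤ 3 * (m : ℝ) * ((m : ℝ) - 3) / 2 := by nlinarith
  have h₃ : 0 ≤ ((m : ℝ) - 1) * ((m : ℝ) ^ 2 - 5 * (m : ℝ) - 2) / 8 := by nlinarith
  unfold qI13
  positivity

/-- The root `μ_m` of the paper, meaningful for `1 ≤ m ≤ 5`. -/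
noncomputable def qI13Root : ℕ → ℝ
  | 1 => √2
  | 2 => (1 + √7) / 2
  | 3 => 1 + √(5 / 2)
  | 4 => 2 + √6
  | _ => 8 + √70

noncomputable def qI13Cofactor : ℕ → ℝ → ℝ
  | 1, μ => 3 * (μ + √2)
  | 2, μ => (μ - (1 - √7) / 2) * (μ + 4)
  | 3, μ => 2 * (μ - (1 - √(5 / 2))) * (μ + 2)
  | 4, μ => 3 / 4 * (μ - (2 - √6)) * (3 * μ + 4)
  | _, μ => (μ - (8 - √70)) * (μ + 1)

theorem qI13_eq_sub_mul_cofactor {m : ℕ} (hm₁ : 1 ≤ m) (hm₅ : m ≤ 5) (μ : ℝ) :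
    qI13 m μ = (qI13Root m - μ) * qI13Cofactor m μ := by
  interval_cases m <;> simp only [qI13, qI13Root, qI13Cofactor] <;> push_cast
  · linear_combination (-3 : ℝ) * Real.sq_sqrt (show (0 : ℝ) ≤ 2 by norm_num)
  · linear_combination (-(μ + 4) / 4) * Real.sq_sqrt (show (0 : ℝ) ≤ 7 by norm_num)
  · linear_combination (-2 * (μ + 2)) * Real.sq_sqrt (show (0 : ℝ) ≤ 5 / 2 by norm_num)
  · linear_combination (-3 / 4 * (3 * μ + 4)) * Real.sq_sqrt (show (0 : ℝ) ≤ 6 by norm_num)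
  · linear_combination (-(μ + 1)) * Real.sq_sqrt (show (0 : ℝ) ≤ 70 by norm_num)

theorem qI13Cofactor_pos {m : ℕ} (hm₁ : 1 ≤ m) (hm₅ : m ≤ 5) {μ : ℝ} (hμ : 0 < μ) :
    0 < qI13Cofactor m μ := by
  have h₇ : 1 ≤ √7 := Real.le_sqrt_of_sq_le (by norm_num)
  have h₅₂ : 1 ≤ √(5 / 2) := Real.le_sqrt_of_sq_le (by norm_num)
  have h₆ : 2 ≤ √6 := Real.le_sqrt_of_sq_le (by norm_num)
  have h₇₀ : 8 ≤ √70 := Real.le_sqrt_of_sq_le (by norm_num)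
  interval_cases m <;> simp only [qI13Cofactor]
  · positivity
  all_goals
    apply mul_pos _ (by positivity)
    try apply mul_pos (by norm_num)
    linarith

theorem qI13Root_pos {m : ℕ} (hm₁ : 1 ≤ m) (hm₅ : m ≤ 5) : 0 < qI13Root m := by
  interval_cases m <;> simp only [qI13Root] <;> positivity

theorem qI13Root_lt_succ {m : ℕ} (hm₁ : 1 ≤ m) (hm₄ : m ≤ 4) :
    qI13Root m < qI13Root (m + 1) := by
  have h₂ : √2 < 3 / 2 := (Real.sqrt_lt' (by norm_num)).2 (by norm_num)
  have h₇ : 13 / 5 < √7 := Real.lt_sqrt_of_sq_lt (by norm_num)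
  have h₇' : √7 < 27 / 10 := (Real.sqrt_lt' (by norm_num)).2 (by norm_num)
  have h₅₂ : 3 / 2 < √(5 / 2) := Real.lt_sqrt_of_sq_lt (by norm_num)
  have h₅₂' : √(5 / 2) < 8 / 5 := (Real.sqrt_lt' (by norm_num)).2 (by norm_num)
  have h₆ : 2 < √6 := Real.lt_sqrt_of_sq_lt (by norm_num)
  have h₆' : √6 < 5 / 2 := (Real.sqrt_lt' (by norm_num)).2 (by norm_num)
  have h₇₀ : 8 < √70 := Real.lt_sqrt_of_sq_lt (by norm_num)
  interval_cases m <;> simp only [qI13Root] <;> linarith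

/-- Sign of `q_m` for type `I_{1,3}`: positivity for `m ≥ 6`; for `1 ≤ m ≤ 5`
a unique positive root `μ_m` characterizing the sign, with explicit values
`μ₁ = √2 < μ₂ = (1+√7)/2 < μ₃ = 1+√(5/2) < μ₄ = 2+√6 < μ₅ = 8+√70`. -/
theorem qI13_sign :
    (∀ m : ℕ, 6 ≤ m → ∀ μ : ℝ, 0 < μ → 0 < qI13 m μ) ∧
    (∀ m : ℕ, 1 ≤ m → m ≤ 5 → ∃! r : ℝ, 0 < r ∧ qI13 m r = 0) ∧
    (∀ m : ℕ, 1 ≤ m → m ≤ 5 → ∀ r : ℝ, 0 < r → qI13 m r = 0 →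
      ∀ μ : ℝ, 0 < μ → (0 ≤ qI13 m μ ↔ μ ≤ r)) ∧
    qI13 1 (Real.sqrt 2) = 0 ∧
    qI13 2 ((1 + Real.sqrt 7) / 2) = 0 ∧
    qI13 3 (1 + Real.sqrt (5 / 2)) = 0 ∧
    qI13 4 (2 + Real.sqrt 6) = 0 ∧
    qI13 5 (8 + Real.sqrt 70) = 0 ∧
    Real.sqrt 2 < (1 + Real.sqrt 7) / 2 ∧
    (1 + Real.sqrt 7) / 2 < 1 + Real.sqrt (5 / 2) ∧
    1 + Real.sqrt (5 / 2) < 2 + Real.sqrt 6 ∧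
    2 + Real.sqrt 6 < 8 + Real.sqrt 70 := by
  have factor {m : ℕ} (hm₁ : 1 ≤ m) (hm₅ : m ≤ 5) :=
    fun μ (_ : 0 < μ) => qI13_eq_sub_mul_cofactor hm₁ hm₅ μ
  have cofactor_pos {m : ℕ} (hm₁ : 1 ≤ m) (hm₅ : m ≤ 5) :=
    fun μ (hμ : 0 < μ) => qI13Cofactor_pos hm₁ hm₅ hμ
  have root_eq_zero {m : ℕ} (hm₁ : 1 ≤ m) (hm₅ : m ≤ 5) : qI13 m (qI13Root m) = 0 :=
    (eq_zero_iff_of_eq_sub_mul (factor hm₁ hm₅) (cofactor_pos hm₁ hm₅)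
      (qI13Root_pos hm₁ hm₅)).2 rfl
  refine ⟨fun m hm μ hμ => qI13_pos_of_six_le hm hμ,
    fun m hm₁ hm₅ => existsUnique_pos_root_of_eq_sub_mul (qI13Root_pos hm₁ hm₅)
      (factor hm₁ hm₅) (cofactor_pos hm₁ hm₅),
    fun m hm₁ hm₅ r hr hqr μ hμ => ?_,
    root_eq_zero (m := 1) le_rfl (by norm_num), root_eq_zero (m := 2) (by norm_num) (by norm_num),
    root_eq_zero (m := 3) (by norm_num) (by norm_num),
    root_eq_zero (m := 4) (by norm_num) (by norm_num), root_eq_zero (m := 5) (by norm_num) le_rfl,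
    qI13Root_lt_succ (m := 1) le_rfl (by norm_num),
    qI13Root_lt_succ (m := 2) (by norm_num) (by norm_num),
    qI13Root_lt_succ (m := 3) (by norm_num) (by norm_num),
    qI13Root_lt_succ (m := 4) (by norm_num) le_rfl⟩
  obtain rfl := (eq_zero_iff_of_eq_sub_mul (factor hm₁ hm₅) (cofactor_pos hm₁ hm₅) hr).1 hqr
  exact nonneg_iff_le_of_eq_sub_mul (factor hm₁ hm₅) (cofactor_pos hm₁ hm₅) hμ
end
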